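/- Given points x₁,...,x_p ∈ 𝕃ⁿ and positive weights ν₁,...,ν_p, the weighted Fréchet mean with respect to the squared Lorentzian distance d²_𝕃(x,y) = -1 - ⟨x,y⟩_L, i.e., the minimizer over μ ∈ 𝕃ⁿ of Σⱼ νⱼ d²_𝕃(xⱼ, μ), is given in closed form by μ* = (Σⱼ νⱼ xⱼ)/|‖Σⱼ νⱼ xⱼ‖_L|. -/

import Mathlib

open Matrix BigOperators Real

noncomputable section

/-- Lorentzian inner product on ℝ^{n+1}. -/
def lprod {n : ℕ} (x y : Fin (n + 1) → ℝ) : ℝ :=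
  ∑ i, (if i = 0 then (-1 : ℝ) else 1) * x i * y i

/-- The hyperboloid model 𝕃ⁿ ⊂ ℝ^{n+1}. -/
def Hyp (n : ℕ) : Set (Fin (n + 1) → ℝ) := {x | lprod x x = -1 ∧ 0 < x 0}

/-- J = diag(-1, Iₙ). -/
def Jmat (n : ℕ) : Matrix (Fin (n + 1)) (Fin (n + 1)) ℝ :=
  Matrix.diagonal (fun i => if i = 0 then (-1 : ℝ) else 1)

/-- Inverse hyperbolic cosine. -/
def arcosh (t : ℝ) : ℝ := Real.log (t + Real.sqrt (t ^ 2 - 1))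

/-- Geodesic distance on the hyperboloid. -/
def dL {n : ℕ} (x y : Fin (n + 1) → ℝ) : ℝ := _root_.arcosh (-(lprod x y))

/-! With `s = ∑ⱼ νⱼ xⱼ` the objective is `-∑ⱼ νⱼ - ⟨s, μ⟩_L`, so one has to maximize `⟨s, μ⟩_L`
over `μ ∈ 𝕃ⁿ`. Since `⟨xⱼ, xₖ⟩_L ≤ -1` for points of `𝕃ⁿ`, `s` is a future-pointing timelike
vector, and the reverse Cauchy–Schwarz inequality `⟨s, μ⟩_L ≤ -|‖s‖_L|` holds for every
`μ ∈ 𝕃ⁿ`, with equality at `μ = s / |‖s‖_L|`. -/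

lemma lprod_eq_neg_mul_add_sum {n : ℕ} (x y : Fin (n + 1) → ℝ) :
    lprod x y = -(x 0 * y 0) + ∑ i : Fin n, x i.succ * y i.succ := by
  simp [lprod, Fin.sum_univ_succ, Fin.succ_ne_zero]

lemma lprod_comm {n : ℕ} (x y : Fin (n + 1) → ℝ) : lprod x y = lprod y x :=
  Finset.sum_congr rfl fun _ _ => by ring

lemma lprod_smul_right {n : ℕ} (a : ℝ) (x y : Fin (n + 1) → ℝ) :
    lprod x (a • y) = a * lprod x y := by
  simp only [lprod, Finset.mul_sum, Pi.smul_apply, smul_eq_mul]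
  exact Finset.sum_congr rfl fun _ _ => by ring

lemma lprod_sum_smul_left {n p : ℕ} (ν : Fin p → ℝ) (x : Fin p → Fin (n + 1) → ℝ)
    (y : Fin (n + 1) → ℝ) : lprod (∑ j, ν j • x j) y = ∑ j, ν j * lprod (x j) y := by
  simp only [lprod, Finset.sum_apply, Pi.smul_apply, smul_eq_mul, Finset.mul_sum,
    Finset.sum_mul]
  rw [Finset.sum_comm]
  exact Finset.sum_congr rfl fun _ _ => Finset.sum_congr rfl fun _ _ => by ring

lemma lprod_sum_smul_sum_smul {n p : ℕ} (ν : Fin p → ℝ) (x : Fin p → Fin (n + 1) → ℝ) :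
    lprod (∑ j, ν j • x j) (∑ j, ν j • x j) =
      ∑ j, ∑ k, ν j * ν k * lprod (x j) (x k) := by
  rw [lprod_sum_smul_left]
  refine Finset.sum_congr rfl fun j _ => ?_
  rw [lprod_comm, lprod_sum_smul_left, Finset.mul_sum]
  exact Finset.sum_congr rfl fun k _ => by rw [lprod_comm]; ring

lemma sqrt_mul_sqrt_le_mul_sub_mul {a b c d : ℝ} (hb : 0 ≤ b) (hba : b ≤ a) (hd : 0 ≤ d)
    (hdc : d ≤ c) : √(a ^ 2 - b ^ 2) * √(c ^ 2 - d ^ 2) ≤ a * c - b * d := by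
  rw [← Real.sqrt_mul (by nlinarith)]
  exact Real.sqrt_le_iff.mpr ⟨by nlinarith, by nlinarith [sq_nonneg (a * d - b * c)]⟩

lemma lprod_le_neg_sqrt_mul_sqrt {n : ℕ} {u v : Fin (n + 1) → ℝ}
    (hu : lprod u u ≤ 0) (hv : lprod v v ≤ 0) (hu0 : 0 ≤ u 0) (hv0 : 0 ≤ v 0) :
    lprod u v ≤ -(√(-lprod u u) * √(-lprod v v)) := by
  set b := √(∑ i : Fin n, u i.succ ^ 2)
  set d := √(∑ i : Fin n, v i.succ ^ 2)
  have hb : b ^ 2 = ∑ i : Fin n, u i.succ ^ 2 := Real.sq_sqrt (by positivity)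
  have hd : d ^ 2 = ∑ i : Fin n, v i.succ ^ 2 := Real.sq_sqrt (by positivity)
  have huu : -lprod u u = u 0 ^ 2 - b ^ 2 := by
    simp only [lprod_eq_neg_mul_add_sum, hb, sq]; ring
  have hvv : -lprod v v = v 0 ^ 2 - d ^ 2 := by
    simp only [lprod_eq_neg_mul_add_sum, hd, sq]; ring
  have hbu : b ≤ u 0 := abs_le_of_sq_le_sq' (by linarith) hu0 |>.2
  have hdv : d ≤ v 0 := abs_le_of_sq_le_sq' (by linarith) hv0 |>.2
  have hspatial : ∑ i : Fin n, u i.succ * v i.succ ≤ b * d :=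
    Real.sum_mul_le_sqrt_mul_sqrt _ _ _
  rw [huu, hvv, lprod_eq_neg_mul_add_sum]
  linarith [sqrt_mul_sqrt_le_mul_sub_mul (Real.sqrt_nonneg _) hbu (Real.sqrt_nonneg _) hdv]

lemma lprod_le_neg_sqrt_of_mem_Hyp {n : ℕ} {u μ : Fin (n + 1) → ℝ} (hu : lprod u u ≤ 0)
    (hu0 : 0 ≤ u 0) (hμ : μ ∈ Hyp n) : lprod u μ ≤ -√(-lprod u u) := by
  simpa [hμ.1] using lprod_le_neg_sqrt_mul_sqrt hu (by linarith [hμ.1]) hu0 hμ.2.le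

lemma lprod_le_neg_one_of_mem_Hyp {n : ℕ} {x y : Fin (n + 1) → ℝ} (hx : x ∈ Hyp n)
    (hy : y ∈ Hyp n) : lprod x y ≤ -1 := by
  simpa [hx.1] using lprod_le_neg_sqrt_of_mem_Hyp (by linarith [hx.1]) hx.2.le hy

lemma lprod_sum_smul_self_le {n p : ℕ} {x : Fin p → Fin (n + 1) → ℝ} (hx : ∀ j, x j ∈ Hyp n)
    {ν : Fin p → ℝ} (hν : ∀ j, 0 ≤ ν j) :
    lprod (∑ j, ν j • x j) (∑ j, ν j • x j) ≤ -(∑ j, ν j) ^ 2 := by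
  rw [lprod_sum_smul_sum_smul, sq, Finset.sum_mul_sum, ← Finset.sum_neg_distrib]
  refine Finset.sum_le_sum fun j _ => ?_
  rw [← Finset.sum_neg_distrib]
  refine Finset.sum_le_sum fun k _ => ?_
  nlinarith [mul_nonneg (hν j) (hν k), lprod_le_neg_one_of_mem_Hyp (hx j) (hx k)]

lemma lprod_inv_sqrt_smul_self {n : ℕ} {s : Fin (n + 1) → ℝ} (hs : lprod s s ≤ 0) :
    lprod s ((√(-lprod s s))⁻¹ • s) = -√(-lprod s s) := by
  rw [lprod_smul_right]
  rcases (Real.sqrt_nonneg (-lprod s s)).eq_or_lt with hr | hr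
  · simp [← hr]
  · have hr2 : √(-lprod s s) ^ 2 = -lprod s s := Real.sq_sqrt (by linarith)
    field_simp
    linarith

lemma inv_sqrt_smul_mem_Hyp {n : ℕ} {s : Fin (n + 1) → ℝ} (hs : lprod s s < 0)
    (hs0 : 0 < s 0) : (√(-lprod s s))⁻¹ • s ∈ Hyp n := by
  have hr : 0 < √(-lprod s s) := Real.sqrt_pos.mpr (neg_pos.mpr hs)
  have hself := lprod_inv_sqrt_smul_self hs.le
  set r := √(-lprod s s)
  refine ⟨?_, mul_pos (inv_pos.mpr hr) hs0⟩
  rw [lprod_smul_right, lprod_comm _ s, hself]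
  field_simp

/-- the weighted Fréchet mean w.r.t. the squared Lorentzian distance
d²_𝕃(x,y) = -1 - ⟨x,y⟩_L has the closed form (Σⱼ νⱼxⱼ)/|‖Σⱼ νⱼxⱼ‖_L|. -/
theorem frechet_mean_closed_form {n p : ℕ} (hp : 0 < p)
    (x : Fin p → (Fin (n + 1) → ℝ)) (hx : ∀ j, x j ∈ Hyp n)
    (ν : Fin p → ℝ) (hν : ∀ j, 0 < ν j) :
    (Real.sqrt (-(lprod (∑ j, ν j • x j) (∑ j, ν j • x j))))⁻¹ • (∑ j, ν j • x j) ∈ Hyp n ∧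
    (∀ μ ∈ Hyp n,
      ∑ j, ν j * (-1 - lprod (x j)
          ((Real.sqrt (-(lprod (∑ j, ν j • x j) (∑ j, ν j • x j))))⁻¹ • ∑ j, ν j • x j)) ≤
        ∑ j, ν j * (-1 - lprod (x j) μ)) := by
  have : Nonempty (Fin p) := ⟨⟨0, hp⟩⟩
  set s := ∑ j, ν j • x j
  have hν_sum : 0 < ∑ j, ν j := Finset.sum_pos (fun j _ => hν j) Finset.univ_nonempty
  have hs : lprod s s < 0 :=
    (lprod_sum_smul_self_le hx fun j => (hν j).le).trans_lt (by nlinarith)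
  have hs0 : 0 < s 0 := by
    simpa [s] using Finset.sum_pos (fun j _ => mul_pos (hν j) (hx j).2) Finset.univ_nonempty
  have hobjective (w : Fin (n + 1) → ℝ) :
      ∑ j, ν j * (-1 - lprod (x j) w) = -∑ j, ν j - lprod s w := by
    simp only [s, lprod_sum_smul_left, mul_sub, Finset.sum_sub_distrib, mul_neg_one,
      Finset.sum_neg_distrib]
  refine ⟨inv_sqrt_smul_mem_Hyp hs hs0, fun μ hμ => ?_⟩
  rw [hobjective, hobjective, lprod_inv_sqrt_smul_self hs.le]
  linarith [lprod_le_neg_sqrt_of_mem_Hyp hs.le hs0.le hμ]
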